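/- arXiv:1303.2973 — 3 statements merged into one kernel-verified Lean document; each statement's English description precedes it below -/
import Mathlib

section
/- Let M be a negative definite symmetric matrix over ℚ with nonnegative off-diagonal entries, and let a be a vector such that Ma has all entries ≤ 0 (i.e., a 'nef over the base' condition). Then all entries of a are ≥ 0. -/
/-! Write `a = a⁺ - a⁻`. Since `a⁻` and `a⁺` are nonnegative with disjoint supports and `M` has
nonnegative off-diagonal entries, `a⁻ ⬝ᵥ M *ᵥ a⁺ ≥ 0`; together with `M *ᵥ a ≤ 0` this gives
`a⁻ ⬝ᵥ M *ᵥ a⁻ = a⁻ ⬝ᵥ M *ᵥ a⁺ - a⁻ ⬝ᵥ M *ᵥ a ≥ 0`, so negative definiteness forces `a⁻ = 0`. -/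

theorem negPart_eq_zero_or_posPart_eq_zero {R : Type*} [AddGroup R] [LinearOrder R]
    [AddLeftMono R] (x : R) : x⁻ = 0 ∨ x⁺ = 0 := by
  rcases le_total 0 x with hx | hx
  · exact .inl (negPart_eq_zero.mpr hx)
  · exact .inr (posPart_eq_zero.mpr hx)

namespace Matrix

variable {ι R : Type*} [Fintype ι]

theorem dotProduct_mulVec_nonneg_of_offDiag_nonneg [Semiring R] [PartialOrder R]
    [IsOrderedRing R] {M : Matrix ι ι R} (hoff : ∀ i j, i ≠ j → 0 ≤ M i j) {x y : ι → R}
    (hx : 0 ≤ x) (hy : 0 ≤ y) (hxy : ∀ i, x i = 0 ∨ y i = 0) : 0 ≤ x ⬝ᵥ M *ᵥ y := by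
  refine Finset.sum_nonneg fun i _ => ?_
  rw [mulVec, dotProduct, Finset.mul_sum]
  refine Finset.sum_nonneg fun j _ => ?_
  rcases eq_or_ne i j with rfl | hij
  · rcases hxy i with h | h <;> simp [h]
  · exact mul_nonneg (hx i) (mul_nonneg (hoff i j hij) (hy j))

theorem nonneg_of_mulVec_nonpos [Ring R] [LinearOrder R] [IsOrderedRing R] {M : Matrix ι ι R}
    (hnegdef : ∀ x : ι → R, x ≠ 0 → x ⬝ᵥ M *ᵥ x < 0) (hoff : ∀ i j, i ≠ j → 0 ≤ M i j)
    {a : ι → R} (ha : M *ᵥ a ≤ 0) : 0 ≤ a := by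
  suffices a⁻ = 0 from negPart_eq_zero.mp this
  by_contra hne
  have hcross : 0 ≤ a⁻ ⬝ᵥ M *ᵥ a⁺ :=
    dotProduct_mulVec_nonneg_of_offDiag_nonneg hoff (negPart_nonneg a) (posPart_nonneg a)
      fun i => negPart_eq_zero_or_posPart_eq_zero (a i)
  have hnef : a⁻ ⬝ᵥ M *ᵥ a ≤ 0 := by
    simpa using dotProduct_le_dotProduct_of_nonneg_left ha (negPart_nonneg a)
  refine (hnegdef a⁻ hne).not_ge ?_
  calc 0 ≤ a⁻ ⬝ᵥ M *ᵥ a⁺ - a⁻ ⬝ᵥ M *ᵥ a := sub_nonneg_of_le (hnef.trans hcross)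
    _ = a⁻ ⬝ᵥ M *ᵥ (a⁺ - a) := by rw [mulVec_sub, dotProduct_sub]
    _ = a⁻ ⬝ᵥ M *ᵥ a⁻ := by
      rw [sub_eq_iff_eq_add'.mpr (eq_add_of_sub_eq (posPart_sub_negPart a))]

end Matrix

theorem negativity_lemma_matrix_general
    {n : ℕ} (M : Matrix (Fin n) (Fin n) ℚ)
    (hnegdef : ∀ x : Fin n → ℚ, x ≠ 0 → dotProduct x (M.mulVec x) < 0)
    (hoff : ∀ i j : Fin n, i ≠ j → 0 ≤ M i j)
    (a : Fin n → ℚ)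
    (hnef : ∀ i, M.mulVec a i ≤ 0) :
    ∀ i, 0 ≤ a i :=
  Matrix.nonneg_of_mulVec_nonpos hnegdef hoff hnef

/-- negativity lemma, linear-algebra form: Let `M` be a negative definite
symmetric rational matrix with nonnegative off-diagonal entries, and let `a` be a vector
with `(M a)_i ≤ 0` for all `i`. Then `a_i ≥ 0` for all `i`. -/
theorem negativity_lemma_matrix
    {n : ℕ} (M : Matrix (Fin n) (Fin n) ℚ)
    (hsymm : M.IsSymm)
    (hnegdef : ∀ x : Fin n → ℚ, x ≠ 0 → dotProduct x (M.mulVec x) < 0)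
    (hoff : ∀ i j : Fin n, i ≠ j → 0 ≤ M i j)
    (a : Fin n → ℚ)
    (hnef : ∀ i, M.mulVec a i ≤ 0) :
    ∀ i, 0 ≤ a i :=
  negativity_lemma_matrix_general M hnegdef hoff a hnef
end

section
/- Let f : X → Y be the minimal resolution of a normal projective surface Y having exactly one simple elliptic singularity (the exceptional locus includes a smooth elliptic curve C, and all other exceptional curves are rational and lie over rational singularities). If the restriction map H¹(O_X) → H¹(O_C) is an isomorphism, then H¹(O_Y) = 0. -/
/-- Let `f : X → Y` be the minimal resolution of a surface `Y` with one
simple elliptic singularity, with exceptional elliptic curve `C`. The Leray spectral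
sequence gives the exact sequence `0 → H¹(O_Y) →ι H¹(O_X) →ε H⁰(R¹f_*O_X)`, and the
restriction `r : H¹(O_X) → H¹(O_C)` factors through `ε` via `q`. If `r` is an
isomorphism, then `H¹(O_Y) = 0`. -/
theorem irregularity_vanishes
    {k : Type*} [Field k]
    {H1Y H1X H1C H0R : Type*}
    [AddCommGroup H1Y] [Module k H1Y] [AddCommGroup H1X] [Module k H1X]
    [AddCommGroup H1C] [Module k H1C] [AddCommGroup H0R] [Module k H0R]
    (ι : H1Y →ₗ[k] H1X) (ε : H1X →ₗ[k] H0R)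
    (r : H1X →ₗ[k] H1C) (q : H0R →ₗ[k] H1C)
    (hinj : Function.Injective ι)
    (hexact : LinearMap.range ι = LinearMap.ker ε)
    (hfact : r = q.comp ε)
    (hiso : Function.Bijective r) :
    ∀ y : H1Y, y = 0 := by
  intro y
  have hε : ε (ι y) = 0 := by
    have : ι y ∈ LinearMap.ker ε := hexact ▸ ⟨y, rfl⟩
    exact this
  have hr : r (ι y) = 0 := by simp [hfact, hε]
  have : ι y = 0 := hiso.injective (by simpa using hr)
  exact hinj (by simpa using this)
end

section
/- Let X be a smooth projective surface over an algebraically closed field with Picard group generated by finitely many classes, let P be a nef ℚ-divisor with P² > 0, and let Null(P) be the set of irreducible curves C with P.C = 0. Then the intersection matrix of the curves in Null(P) is negative definite, and in particular Null(P) consists of finitely many curves. -/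
/-!
The null curves span a subspace of `P^⊥`, on which the form is negative definite.
On `P^⊥` the form `-B` is positive definite and distinct null curves are pairwise obtuse for it.
Nonzero pairwise obtuse vectors in a finite-dimensional space form a finite set: fixing one of
them, `w`, those on either open side of the hyperplane `B w = 0` are linearly independent
(Serre's lemma), and those on the hyperplane span a space of smaller dimension than the whole set,
since `B w w > 0`.
-/

open Module Submodule

namespace LinearMap.BilinForm

variable {K M : Type*} [Field K] [LinearOrder K] [IsStrictOrderedRing K]
  [AddCommGroup M] [Module K M] [FiniteDimensional K M]
  {B : LinearMap.BilinForm K M} {S : Set M}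

theorem finite_inter_setOf_pos_of_pairwise_le_zero (hB : B.toQuadraticMap.PosDef)
    (hS : S.Pairwise fun x y ↦ B x y ≤ 0) (f : Dual K M) :
    (S ∩ {x | 0 < f x}).Finite := by
  have : Finite (S ∩ {x | 0 < f x} : Set M) :=
    (B.linearIndependent_of_pairwise_le_zero hB f Subtype.val (fun x ↦ x.2.2)
      fun x y hxy ↦ hS x.2.1 y.2.1 (Subtype.coe_ne_coe.mpr hxy)).finite
  exact Set.toFinite _

theorem finite_of_pairwise_le_zero (hB : B.toQuadraticMap.PosDef) (h0 : (0 : M) ∉ S)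
    (hS : S.Pairwise fun x y ↦ B x y ≤ 0) : S.Finite := by
  obtain ⟨n, hn⟩ : ∃ n, finrank K (span K S) = n := ⟨_, rfl⟩
  induction n using Nat.strong_induction_on generalizing S with
  | _ n ih =>
  obtain rfl | ⟨w, hw⟩ := S.eq_empty_or_nonempty
  · exact Set.finite_empty
  have hsplit : S ⊆ (S ∩ {x | 0 < B w x}) ∪ (S ∩ {x | 0 < (-B w) x}) ∪ (S ∩ ker (B w)) := by
    intro x hx
    rcases lt_trichotomy (B w x) 0 with h | h | h
    · exact .inl (.inr ⟨hx, by simpa using h⟩)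
    · exact .inr ⟨hx, h⟩
    · exact .inl (.inl ⟨hx, h⟩)
  have hw_ker : w ∉ ker (B w) := fun h ↦
    (hB w (ne_of_mem_of_not_mem hw h0)).ne' (by simpa using h)
  have hlt : span K (S ∩ ker (B w)) < span K S :=
    (SetLike.lt_iff_le_and_exists).2 ⟨span_mono Set.inter_subset_left,
      w, subset_span hw, fun h ↦ hw_ker (span_le.2 Set.inter_subset_right h)⟩
  have hker : (S ∩ ker (B w)).Finite :=
    ih _ (hn ▸ finrank_lt_finrank_of_lt hlt) (fun h ↦ h0 h.1) (hS.mono Set.inter_subset_left) rfl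
  exact (((finite_inter_setOf_pos_of_pairwise_le_zero hB hS _).union
    (finite_inter_setOf_pos_of_pairwise_le_zero hB hS _)).union hker).subset hsplit

end LinearMap.BilinForm

theorem null_locus_negative_definite_and_finite_general
    {V : Type*} [AddCommGroup V] [Module ℝ V] [FiniteDimensional ℝ V]
    (B : V →ₗ[ℝ] V →ₗ[ℝ] ℝ)
    (Curves : Set V) (P : V)
    (hsig : ∀ x : V, x ≠ 0 → B P x = 0 → B x x < 0)
    (hC0 : ∀ C ∈ Curves, C ≠ 0)
    (hpair : ∀ C ∈ Curves, ∀ C' ∈ Curves, C ≠ C' → 0 ≤ B C C') :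
    (∀ x ∈ Submodule.span ℝ {C | C ∈ Curves ∧ B P C = 0}, x ≠ 0 → B x x < 0) ∧
    {C | C ∈ Curves ∧ B P C = 0}.Finite := by
  set N := {C | C ∈ Curves ∧ B P C = 0}
  set U := LinearMap.ker (B P)
  have hNU : N ⊆ U := fun C hC ↦ hC.2
  refine ⟨fun x hx hx0 ↦ hsig x hx0 (span_le.2 hNU hx), ?_⟩
  have hpos : (-LinearMap.BilinForm.restrict B U).toQuadraticMap.PosDef := fun x hx ↦
    neg_pos.2 (hsig x (by simpa using hx) x.2)
  have hfin : (Subtype.val ⁻¹' N : Set U).Finite :=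
    LinearMap.BilinForm.finite_of_pairwise_le_zero hpos (fun h ↦ hC0 0 h.1 rfl) fun x hx y hy hxy ↦
      neg_nonpos.2 (hpair _ hx.1 _ hy.1 (Subtype.coe_ne_coe.mpr hxy))
  exact (hfin.image Subtype.val).subset fun C hC ↦ ⟨⟨C, hNU hC⟩, hC, rfl⟩

/-- Let `X` be a smooth projective surface with finitely generated
Picard group, modeled by the finite-dimensional real Néron–Severi space `V` with
symmetric intersection form `B` of signature `(1, ρ-1)` (Hodge index theorem: the form
is negative definite on the orthogonal complement of `P` when `B P P > 0`). Let
`Curves` be the set of classes of irreducible curves (nonzero, with pairwise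
nonnegative intersections), `P` a nef class with `P² > 0`, and
`Null(P) = {C ∈ Curves | P.C = 0}`. Then the intersection form is negative definite
on the span of `Null(P)`, and `Null(P)` is finite. -/
theorem null_locus_negative_definite_and_finite
    {V : Type*} [AddCommGroup V] [Module ℝ V] [FiniteDimensional ℝ V]
    (B : V →ₗ[ℝ] V →ₗ[ℝ] ℝ)
    (hsymm : ∀ x y : V, B x y = B y x)
    (Curves : Set V) (P : V)
    (hP2 : 0 < B P P)
    (hnef : ∀ C ∈ Curves, 0 ≤ B P C)
    (hsig : ∀ x : V, x ≠ 0 → B P x = 0 → B x x < 0)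
    (hC0 : ∀ C ∈ Curves, C ≠ 0)
    (hpair : ∀ C ∈ Curves, ∀ C' ∈ Curves, C ≠ C' → 0 ≤ B C C') :
    (∀ x ∈ Submodule.span ℝ {C | C ∈ Curves ∧ B P C = 0}, x ≠ 0 → B x x < 0) ∧
    {C | C ∈ Curves ∧ B P C = 0}.Finite :=
  null_locus_negative_definite_and_finite_general B Curves P hsig hC0 hpair
end
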